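/- If |V_M(R)| = m > 1, then the graph G_M(R) is either connected or has exactly m connected components; equivalently, either G_M(R) is connected, or no two distinct min-max nodes of R are at Manhattan distance 1 (every component is a single vertex). -/

import Mathlib

/-- Manhattan distance on the grid ℤ × ℤ. -/
def md (u v : ℤ × ℤ) : ℕ := (u.1 - v.1).natAbs + (u.2 - v.2).natAbs

/-- Eccentricity of a grid node with respect to the robot set `R`:
the maximum Manhattan distance from a robot of `R` to the node. -/
def ecc (R : Finset (ℤ × ℤ)) (v : ℤ × ℤ) : ℕ := R.sup (fun u => md u v)

/-- `v` is a min-max node of `R`. -/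
def IsMinMax (R : Finset (ℤ × ℤ)) (v : ℤ × ℤ) : Prop :=
  ∀ v' : ℤ × ℤ, ecc R v ≤ ecc R v'

/-- The subgraph `G_M(R)` of the infinite grid graph induced by the set of
min-max nodes of `R`: two min-max nodes are adjacent iff their Manhattan
distance is 1. -/
def GM (R : Finset (ℤ × ℤ)) : SimpleGraph {v : ℤ × ℤ // IsMinMax R v} where
  Adj u v := md u.val v.val = 1
  symm := by
    constructor
    intro u v h
    simp only [md] at h ⊢
    omega
  loopless := by
    constructor
    intro u h
    simp [md] at h


/-!
In the rotated coordinates `p = x + y`, `q = x - y` the Manhattan distance is the Chebyshev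
distance, so the nodes of eccentricity at most `E` form the box
`[max p - E, min p + E] × [max q - E, min q + E]` (restricted to the lattice `p ≡ q [ZMOD 2]`),
and `V_M(R)` is this box for the minimal eccentricity. A grid edge changes both `p` and `q` by
`±1`, so two adjacent min-max nodes force both sides of the box to have length at least `1`.
In such a box every node has a neighbour in the box that is strictly closer to any given node
of the box, hence `G_M(R)` is connected.
-/

def gridGraph : SimpleGraph (ℤ × ℤ) where
  Adj u v := md u v = 1
  symm := ⟨fun u v h => by simp only [md] at h ⊢; omega⟩
  loopless := ⟨fun u h => by simp [md] at h⟩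

def diagBox (a b c d : ℤ) : Set (ℤ × ℤ) :=
  {z | a ≤ z.1 + z.2 ∧ z.1 + z.2 ≤ b ∧ c ≤ z.1 - z.2 ∧ z.1 - z.2 ≤ d}

lemma md_eq_max (u v : ℤ × ℤ) :
    md u v = max (u.1 + u.2 - (v.1 + v.2)).natAbs (u.1 - u.2 - (v.1 - v.2)).natAbs := by
  unfold md; omega

lemma md_le_iff {u v : ℤ × ℤ} {E : ℕ} :
    md u v ≤ E ↔ u.1 + u.2 ≤ v.1 + v.2 + E ∧ v.1 + v.2 ≤ u.1 + u.2 + E ∧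
      u.1 - u.2 ≤ v.1 - v.2 + E ∧ v.1 - v.2 ≤ u.1 - u.2 + E := by
  rw [md_eq_max]; omega

lemma ecc_le_iff_mem_diagBox {R : Finset (ℤ × ℤ)} (hR : R.Nonempty) (E : ℕ) (w : ℤ × ℤ) :
    ecc R w ≤ E ↔ w ∈ diagBox (R.sup' hR (fun u => u.1 + u.2) - E)
      (R.inf' hR (fun u => u.1 + u.2) + E) (R.sup' hR (fun u => u.1 - u.2) - E)
      (R.inf' hR (fun u => u.1 - u.2) + E) := by
  simp only [ecc, Finset.sup_le_iff, md_le_iff, forall₂_and, diagBox, Set.mem_ofPred_eq]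
  refine and_congr ?_ (and_congr ?_ (and_congr ?_ ?_))
  · rw [sub_le_iff_le_add, Finset.sup'_le_iff]
  · rw [Int.le_add_iff_sub_le, Finset.le_inf'_iff]
    simp only [sub_le_iff_le_add]
  · rw [sub_le_iff_le_add, Finset.sup'_le_iff]
  · rw [Int.le_add_iff_sub_le, Finset.le_inf'_iff]
    simp only [sub_le_iff_le_add]

lemma isMinMax_iff_ecc_le {R : Finset (ℤ × ℤ)} {v₀ : ℤ × ℤ} (h₀ : IsMinMax R v₀) {v : ℤ × ℤ} :
    IsMinMax R v ↔ ecc R v ≤ ecc R v₀ :=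
  ⟨fun h => h v₀, fun h v' => h.trans (h₀ v')⟩

lemma exists_unit_step_toward {a b s t : ℤ} (hab : a < b) (hs : a ≤ s ∧ s ≤ b) (ht : a ≤ t ∧ t ≤ b) :
    ∃ e : ℤ, (e = 1 ∨ e = -1) ∧ (a ≤ s + e ∧ s + e ≤ b) ∧
      (s = t ∨ (s + e - t).natAbs < (s - t).natAbs) := by
  rcases lt_trichotomy s t with hst | rfl | hst
  · exact ⟨1, by omega⟩
  · rcases lt_or_ge s b with hsb | hsb
    · exact ⟨1, by omega⟩
    · exact ⟨-1, by omega⟩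
  · exact ⟨-1, by omega⟩

lemma exists_adj_mem_diagBox_md_lt {a b c d : ℤ} (hab : a < b) (hcd : c < d)
    {x y : ℤ × ℤ} (hx : x ∈ diagBox a b c d) (hy : y ∈ diagBox a b c d) (hxy : x ≠ y) :
    ∃ z ∈ diagBox a b c d, md x z = 1 ∧ md z y < md x y := by
  obtain ⟨hx1, hx2, hx3, hx4⟩ := hx
  obtain ⟨hy1, hy2, hy3, hy4⟩ := hy
  obtain ⟨e, he, hpe, hpt⟩ := exists_unit_step_toward hab ⟨hx1, hx2⟩ ⟨hy1, hy2⟩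
  obtain ⟨f, hf, hqf, hqt⟩ := exists_unit_step_toward hcd ⟨hx3, hx4⟩ ⟨hy3, hy4⟩
  have hxy_rot : x.1 + x.2 ≠ y.1 + y.2 ∨ x.1 - x.2 ≠ y.1 - y.2 := by
    by_contra! h; exact hxy (Prod.ext (by omega) (by omega))
  obtain ⟨z, hzp, hzq⟩ : ∃ z : ℤ × ℤ, z.1 + z.2 = x.1 + x.2 + e ∧ z.1 - z.2 = x.1 - x.2 + f :=
    ⟨(x.1 + (e + f) / 2, x.2 + (e - f) / 2), by omega, by omega⟩
  refine ⟨z, ?_, ?_, ?_⟩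
  · simp only [diagBox, Set.mem_ofPred_eq, hzp, hzq]; omega
  · rw [md_eq_max, hzp, hzq]
    clear hpt hqt
    omega
  · have hparity : (x.1 + x.2 - (y.1 + y.2)) - (x.1 - x.2 - (y.1 - y.2)) = 2 * (x.2 - y.2) := by ring
    rw [md_eq_max, md_eq_max, hzp, hzq]
    generalize x.1 + x.2 = P at *
    generalize x.1 - x.2 = Q at *
    generalize y.1 + y.2 = P' at *
    generalize y.1 - y.2 = Q' at *
    omega

theorem diagBox_preconnected {a b c d : ℤ} (hab : a < b) (hcd : c < d) :
    (gridGraph.induce (diagBox a b c d)).Preconnected := by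
  intro x y
  induction h : md x y using Nat.strong_induction_on generalizing x with
  | _ n ih =>
    rcases eq_or_ne x y with rfl | hxy
    · rfl
    obtain ⟨z, hz, hxz, hzy⟩ :=
      exists_adj_mem_diagBox_md_lt hab hcd x.2 y.2 (Subtype.coe_ne_coe.mpr hxy)
    have hadj : (gridGraph.induce (diagBox a b c d)).Adj x ⟨z, hz⟩ := SimpleGraph.induce_adj.mpr hxz
    exact hadj.reachable.trans (ih _ (h ▸ hzy) ⟨z, hz⟩ rfl)

lemma sides_lt_of_mem_diagBox_of_md_eq_one {a b c d : ℤ} {v w : ℤ × ℤ}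
    (hv : v ∈ diagBox a b c d) (hw : w ∈ diagBox a b c d) (hvw : md v w = 1) :
    a < b ∧ c < d := by
  simp only [diagBox, Set.mem_ofPred_eq, md] at hv hw hvw; omega

theorem stmt_14_general (R : Finset (ℤ × ℤ)) (hR : R.Nonempty) :
    (GM R).Connected ∨
      ∀ v v' : ℤ × ℤ, IsMinMax R v → IsMinMax R v' → v ≠ v' → md v v' ≠ 1 := by
  by_cases hadj : ∃ v w : ℤ × ℤ, IsMinMax R v ∧ IsMinMax R w ∧ md v w = 1
  · obtain ⟨v, w, hv, hw, hvw⟩ := hadj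
    have hbox : {z | IsMinMax R z} = diagBox _ _ _ _ :=
      Set.ext fun z => (isMinMax_iff_ecc_le hv).trans (ecc_le_iff_mem_diagBox hR (ecc R v) z)
    have hv' : v ∈ {z | IsMinMax R z} := hv
    have hw' : w ∈ {z | IsMinMax R z} := hw
    rw [hbox] at hv' hw'
    obtain ⟨hab, hcd⟩ := sides_lt_of_mem_diagBox_of_md_eq_one hv' hw' hvw
    refine Or.inl ((SimpleGraph.connected_iff _).mpr ⟨?_, ⟨⟨v, hv⟩⟩⟩)
    change (gridGraph.induce {z | IsMinMax R z}).Preconnected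
    rw [hbox]
    exact diagBox_preconnected hab hcd
  · exact Or.inr fun v v' hv hv' _ hvv' => hadj ⟨v, v', hv, hv', hvv'⟩

/-- If `|V_M(R)| = m > 1`, then `G_M(R)` is either connected or
has exactly `m` components; equivalently, either `G_M(R)` is connected, or no
two distinct min-max nodes of `R` are at Manhattan distance 1 (so every
component is a single vertex). -/
theorem stmt_14 (R : Finset (ℤ × ℤ)) (hR : R.Nonempty) (m : ℕ) (hm : 1 < m)
    (hcard : {v : ℤ × ℤ | IsMinMax R v}.ncard = m) :
    (GM R).Connected ∨
      ∀ v v' : ℤ × ℤ, IsMinMax R v → IsMinMax R v' → v ≠ v' → md v v' ≠ 1 :=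
  stmt_14_general R hR
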